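/- arXiv:2305.06096 — 4 statements merged into one kernel-verified Lean document; each statement's English description precedes it below -/
import Mathlib

section
/- Let h_n be the (2n+1)-dimensional Heisenberg Lie algebra with basis A_1,...,A_n,B_1,...,B_n,C satisfying [A_i,B_j]=δ_{ij}C and all other basis brackets zero, and let e be the span of A_1,...,A_n,B_1,...,B_n. Then e is strongly 2n-bracket generating: for any 1 ≤ l ≤ 2n, any linearly independent vectors X_1,...,X_l ∈ e and any Z_1,...,Z_l ∈ h_n, there exists Y ∈ e such that Z_j - [X_j, Y] ∈ e for all j = 1,...,l. -/
/-- The Heisenberg Lie algebra `h_n` modelled on `ℝⁿ × ℝⁿ × ℝ`, where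
`(a,b,c)` stands for `Σ aᵢ Aᵢ + Σ bᵢ Bᵢ + c C`. -/
abbrev heisAlg (n : ℕ) : Type := (Fin n → ℝ) × (Fin n → ℝ) × ℝ

/-- The Lie bracket of `h_n`: determined by `[Aᵢ,Bⱼ] = δᵢⱼ C`, all other basis
brackets being zero. -/
noncomputable def heisBrk {n : ℕ} (x y : heisAlg n) : heisAlg n :=
  (0, 0, (∑ i, x.1 i * y.2.1 i) - ∑ i, y.1 i * x.2.1 i)

/-- The horizontal subspace `e = span(A₁,...,Aₙ,B₁,...,Bₙ)`, i.e. vectors with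
vanishing `C`-component. -/
def heisHor {n : ℕ} (x : heisAlg n) : Prop := x.2.2 = 0

/-- `e` is strongly `2n`-bracket generating in the Heisenberg Lie algebra: for any
`1 ≤ l ≤ 2n`, any linearly independent `X₁,...,X_l ∈ e` and any `Z₁,...,Z_l ∈ h_n`,
there is a single `Y ∈ e` with `Zⱼ - [Xⱼ,Y] ∈ e` for all `j`. -/
theorem heisenberg_strongly_bracket_generating (n l : ℕ) (hl₁ : 1 ≤ l) (hl₂ : l ≤ 2 * n)
    (X : Fin l → heisAlg n) (hXhor : ∀ j, heisHor (X j)) (hXind : LinearIndependent ℝ X)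
    (Z : Fin l → heisAlg n) :
    ∃ Y : heisAlg n, heisHor Y ∧ ∀ j, heisHor (Z j - heisBrk (X j) Y) := by
  classical
  -- the linear map `v ↦ (j ↦ ω(Xⱼ, v))`
  let T : ((Fin n → ℝ) × (Fin n → ℝ)) →ₗ[ℝ] (Fin l → ℝ) :=
    { toFun := fun v j => (∑ i, (X j).1 i * v.2 i) - ∑ i, v.1 i * (X j).2.1 i
      map_add' := by
        intro v w
        funext j
        simp only [Prod.fst_add, Prod.snd_add, Pi.add_apply, mul_add, add_mul,
          Finset.sum_add_distrib]
        ring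
      map_smul' := by
        intro c v
        funext j
        simp only [Prod.smul_fst, Prod.smul_snd, Pi.smul_apply, smul_eq_mul,
          RingHom.id_apply]
        rw [mul_sub, Finset.mul_sum, Finset.mul_sum]
        congr 1 <;> exact Finset.sum_congr rfl fun i _ => by ring }
  have hT : Function.Surjective T := by
    rw [← LinearMap.dualMap_injective_iff]
    rw [injective_iff_map_eq_zero]
    intro φ hφ
    set d : Fin l → ℝ := fun j => φ fun k => if j = k then 1 else 0 with hd
    have key : ∀ v, ∑ j, d j * T v j = 0 := by
      intro v
      have h0 : φ (T v) = 0 := by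
        have := LinearMap.congr_fun hφ v
        simpa [LinearMap.dualMap_apply] using this
      rw [LinearMap.pi_apply_eq_sum_univ φ (T v)] at h0
      rw [← h0]
      exact Finset.sum_congr rfl fun j _ => by rw [smul_eq_mul, mul_comm]
    -- sums S1, S2
    set S1 : Fin n → ℝ := fun i => ∑ j, d j * (X j).1 i with hS1
    set S2 : Fin n → ℝ := fun i => ∑ j, d j * (X j).2.1 i with hS2
    have hsq : (∑ i, S1 i * S1 i) + ∑ i, S2 i * S2 i = 0 := by
      have hk := key (fun i => -S2 i, fun i => S1 i)
      have : ∑ j, d j * T (fun i => -S2 i, fun i => S1 i) j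
          = (∑ i, S1 i * S1 i) + ∑ i, S2 i * S2 i := by
        have expand : ∀ j, d j * T (fun i => -S2 i, fun i => S1 i) j
            = ∑ i, (d j * (X j).1 i * S1 i + d j * (X j).2.1 i * S2 i) := by
          intro j
          show d j * ((∑ i, (X j).1 i * S1 i) - ∑ i, (-S2 i) * (X j).2.1 i) = _
          rw [Finset.sum_add_distrib]
          rw [mul_sub, Finset.mul_sum, Finset.mul_sum]
          rw [sub_eq_add_neg, ← Finset.sum_neg_distrib]
          congr 1 <;> exact Finset.sum_congr rfl fun i _ => by ring
        rw [Finset.sum_congr rfl fun j _ => expand j, Finset.sum_comm]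
        rw [← Finset.sum_add_distrib]
        refine Finset.sum_congr rfl fun i _ => ?_
        rw [Finset.sum_add_distrib]
        congr 1
        · rw [← Finset.sum_mul]
        · rw [← Finset.sum_mul]
      rw [this] at hk
      exact hk
    have n1 : (0:ℝ) ≤ ∑ i, S1 i * S1 i :=
      Finset.sum_nonneg fun i _ => mul_self_nonneg (S1 i)
    have n2 : (0:ℝ) ≤ ∑ i, S2 i * S2 i :=
      Finset.sum_nonneg fun i _ => mul_self_nonneg (S2 i)
    have e1 : ∑ i, S1 i * S1 i = 0 := by linarith
    have e2 : ∑ i, S2 i * S2 i = 0 := by linarith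
    have hS1z : ∀ i, S1 i = 0 := fun i => mul_self_eq_zero.mp
      ((Finset.sum_eq_zero_iff_of_nonneg fun i _ => mul_self_nonneg (S1 i)).mp e1 i
        (Finset.mem_univ i))
    have hS2z : ∀ i, S2 i = 0 := fun i => mul_self_eq_zero.mp
      ((Finset.sum_eq_zero_iff_of_nonneg fun i _ => mul_self_nonneg (S2 i)).mp e2 i
        (Finset.mem_univ i))
    have hdz : ∀ j, d j = 0 := by
      have hsum : ∑ j, d j • X j = 0 := by
        refine Prod.ext ?_ (Prod.ext ?_ ?_)
        · rw [Prod.fst_sum]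
          funext i
          rw [Finset.sum_apply]
          simpa using hS1z i
        · rw [Prod.snd_sum, Prod.fst_sum]
          funext i
          rw [Finset.sum_apply]
          simpa using hS2z i
        · rw [Prod.snd_sum, Prod.snd_sum]
          simp only [Prod.smul_snd, smul_eq_mul]
          have : ∀ j ∈ Finset.univ, d j * (X j).2.2 = 0 := by
            intro j _; rw [hXhor j, mul_zero]
          rw [Finset.sum_congr rfl this]
          simp
      exact Fintype.linearIndependent_iff.mp hXind d hsum
    refine LinearMap.ext fun w => ?_
    rw [LinearMap.pi_apply_eq_sum_univ φ w, LinearMap.zero_apply]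
    refine Finset.sum_eq_zero fun j _ => ?_
    have h : φ (fun k => if j = k then 1 else 0) = 0 := hdz j
    rw [h, smul_zero]
  obtain ⟨v, hv⟩ := hT fun j => (Z j).2.2
  refine ⟨(v.1, v.2, 0), rfl, fun j => ?_⟩
  have hvj : ((∑ i, (X j).1 i * v.2 i) - ∑ i, v.1 i * (X j).2.1 i) = (Z j).2.2 :=
    congr_fun hv j
  show (Z j - heisBrk (X j) (v.1, v.2, 0)).2.2 = 0
  simp only [heisBrk, Prod.snd_sub, Prod.sub_def]
  simpa [sub_eq_zero] using hvj.symm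
end

section
/- Let f: M → G be smooth with Darboux derivative α = f*ω, and let η ∈ Ω^1(M,g) satisfy dη + [α,η] = 0. Define η̃ = Ad(f)η (pointwise, η̃|_x = Ad(f(x)) η|_x). Then η̃ is a closed g-valued one-form: dη̃ = 0. -/
/-- Let `G` be the group of units of a real Banach algebra `A`, `f : M → G` smooth with
Darboux derivative `α = f*ω`, and let `η ∈ Ω¹(M, g)` satisfy `dη + [α,η] = 0`, i.e.
`D_v(η(w)) - D_w(η(v)) + [α(v),η(w)] - [α(w),η(v)] = 0` with `[a,b] = ab - ba`.
Then `η̃ = Ad(f)η`, given by `η̃_x = f(x) η_x f(x)⁻¹`, is a closed `g`-valued one-form: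
`dη̃ = 0`. -/
theorem Ad_twisted_form_closed
    {M A : Type*} [NormedAddCommGroup M] [NormedSpace ℝ M]
    [NormedRing A] [NormedAlgebra ℝ A] [CompleteSpace A]
    (f : M → A) (hf : ContDiff ℝ (⊤ : ℕ∞) f) (hunit : ∀ x, IsUnit (f x))
    (α : M → M → A) (hα : ∀ x v, α x v = Ring.inverse (f x) * fderiv ℝ f x v)
    (η : M → M →L[ℝ] A) (hη : ContDiff ℝ (⊤ : ℕ∞) η)
    (hMC : ∀ x v w, fderiv ℝ (fun y => η y w) x v - fderiv ℝ (fun y => η y v) x w +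
      (α x v * η x w - η x w * α x v) - (α x w * η x v - η x v * α x w) = 0)
    (x : M) (v w : M) :
    fderiv ℝ (fun y => f y * η y w * Ring.inverse (f y)) x v -
      fderiv ℝ (fun y => f y * η y v * Ring.inverse (f y)) x w = 0 := by
  have hfd : Differentiable ℝ f := hf.differentiable (by simp)
  have hηd : Differentiable ℝ η := hη.differentiable (by simp)
  obtain ⟨U, hU⟩ := hunit x
  have h1 : f x * Ring.inverse (f x) = 1 := Ring.mul_inverse_cancel _ (hunit x)
  have key : ∀ (u v : M), fderiv ℝ (fun y => f y * η y u * Ring.inverse (f y)) x v =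
      fderiv ℝ f x v * η x u * Ring.inverse (f x)
      + f x * fderiv ℝ (fun y => η y u) x v * Ring.inverse (f x)
      - f x * η x u * (Ring.inverse (f x) * fderiv ℝ f x v * Ring.inverse (f x)) := by
    intro u v
    have hηu : HasFDerivAt (fun y => η y u) (fderiv ℝ (fun y => η y u) x) x :=
      ((hηd x).clm_apply (differentiableAt_const u)).hasFDerivAt
    have hfx : HasFDerivAt f (fderiv ℝ f x) x := (hfd x).hasFDerivAt
    have hR : HasFDerivAt Ring.inverse
        (-(ContinuousLinearMap.mulLeftRight ℝ A ↑U⁻¹ ↑U⁻¹)) (f x) :=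
      hU ▸ hasFDerivAt_ringInverse U
    have hgx : HasFDerivAt (fun y => Ring.inverse (f y))
        ((-(ContinuousLinearMap.mulLeftRight ℝ A ↑U⁻¹ ↑U⁻¹)).comp (fderiv ℝ f x)) x :=
      hR.comp x hfx
    have hp := (hfx.mul' hηu).mul' hgx
    rw [show (fun y => f y * η y u * Ring.inverse (f y)) =
        ((f * fun y => η y u) * fun y => Ring.inverse (f y)) from rfl, hp.fderiv]
    have hinv : (↑U⁻¹ : A) = Ring.inverse (f x) := by rw [← hU, Ring.inverse_unit]
    simp [ContinuousLinearMap.add_apply, ContinuousLinearMap.smul_apply,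
      ContinuousLinearMap.smulRight_apply, ContinuousLinearMap.comp_apply,
      ContinuousLinearMap.neg_apply, ContinuousLinearMap.mulLeftRight_apply,
      smul_eq_mul, hinv]
    noncomm_ring
  rw [key w v, key v w]
  have hsum := hMC x v w
  rw [hα x v, hα x w] at hsum
  set F := f x
  set G := Ring.inverse (f x)
  set a := fderiv ℝ f x v
  set b := fderiv ℝ f x w
  set p := η x v
  set q := η x w
  set Dv := fderiv ℝ (fun y => η y w) x v
  set Dw := fderiv ℝ (fun y => η y v) x w
  have expand : a * q * G + F * Dv * G - F * q * (G * a * G)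
      - (b * p * G + F * Dw * G - F * p * (G * b * G))
      = F * (Dv - Dw + (G * a * q - q * (G * a)) - (G * b * p - p * (G * b))) * G := by
    simp only [mul_add, add_mul, mul_sub, sub_mul, ← mul_assoc, h1, one_mul]
    noncomm_ring
  rw [expand, hsum]
  simp
end

section
/- Let G be a Lie group with Lie algebra g, f: M → G smooth with Darboux derivative α = f*ω, and F: M → g smooth. Define g_t = f · exp(tF) (pointwise product) and β(t) = g_t* ω. Then the derivative at t=0 of the curve of Darboux derivatives is (d/dt)|_{t=0} β(t) = dF + [α, F]. -/
open NormedSpace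

private theorem ring_inverse_mul_of_units {R : Type*} [MonoidWithZero R] {a b : R}
    (ha : IsUnit a) (hb : IsUnit b) :
    Ring.inverse (a * b) = Ring.inverse b * Ring.inverse a := by
  obtain ⟨ua, rfl⟩ := ha; obtain ⟨ub, rfl⟩ := hb
  rw [← Units.val_mul, Ring.inverse_unit, Ring.inverse_unit, Ring.inverse_unit, mul_inv_rev,
    Units.val_mul]

/-- Let `G` be the group of units of a real Banach algebra `A` with Lie algebra `g = A`,
`f : M → G` smooth with Darboux derivative `α_x(v) = f(x)⁻¹ df_x(v)`, and `F : M → g`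
smooth.  Set `g_t = f · exp(tF)` pointwise and let `β(t) = g_t*ω` be its Darboux
derivative, `β(t)_x(v) = (g_t(x))⁻¹ d(g_t)_x(v)`.  Then
`(d/dt)|_{t=0} β(t)_x(v) = dF_x(v) + [α_x(v), F(x)]`, where `[a,b] = ab - ba`. -/
theorem derivative_of_darboux_variation
    {M A : Type*} [NormedAddCommGroup M] [NormedSpace ℝ M]
    [NormedRing A] [NormedAlgebra ℝ A] [CompleteSpace A]
    (f : M → A) (hf : ContDiff ℝ (⊤ : ℕ∞) f) (hunit : ∀ x, IsUnit (f x))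
    (α : M → M → A) (hα : ∀ x v, α x v = Ring.inverse (f x) * fderiv ℝ f x v)
    (F : M → A) (hF : ContDiff ℝ (⊤ : ℕ∞) F) (x : M) (v : M) :
    HasDerivAt
      (fun t : ℝ => Ring.inverse (f x * exp (t • F x)) *
        fderiv ℝ (fun y => f y * exp (t • F y)) x v)
      (fderiv ℝ F x v + (α x v * F x - F x * α x v)) 0 := by
  have hexp : ContDiff ℝ (⊤ : ℕ∞) (exp : A → A) := by
    rw [contDiff_iff_contDiffAt]
    exact fun y => (exp_analytic (𝕂 := ℝ) y).contDiffAt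
  set H : ℝ × M → A := fun p => f p.2 * exp (p.1 • F p.2) with hH_def
  have hH : ContDiff ℝ (⊤ : ℕ∞) H :=
    (hf.comp contDiff_snd).mul (hexp.comp (contDiff_fst.smul (hF.comp contDiff_snd)))
  -- B1: the spatial derivative equals fderiv of H applied to (0, v)
  have hB1 : ∀ t : ℝ, fderiv ℝ (fun y => f y * exp (t • F y)) x v
      = fderiv ℝ H (t, x) (0, v) := by
    intro t
    have h1 : HasFDerivAt (fun y : M => (t, y))
        (ContinuousLinearMap.inr ℝ ℝ M) x := hasFDerivAt_prodMk_right t x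
    have h2 := (hH.differentiable (by simp) (t, x)).hasFDerivAt
    have h3 : HasFDerivAt (fun y => f y * exp (t • F y))
        ((fderiv ℝ H (t, x)).comp (ContinuousLinearMap.inr ℝ ℝ M)) x := h2.comp x h1
    rw [h3.fderiv]; rfl
  -- B2: derivative in t of the map t ↦ fderiv H (t,x) (0,v)
  have hH' : ContDiff ℝ (⊤ : ℕ∞) (fderiv ℝ H) := hH.fderiv_right (m := (⊤ : ℕ∞)) (by simp)
  have hcurve : HasDerivAt (fun t : ℝ => (t, x)) ((1 : ℝ), (0 : M)) 0 :=
    (hasDerivAt_id (0:ℝ)).prodMk (hasDerivAt_const _ _)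
  have hB2 : HasDerivAt (fun t : ℝ => fderiv ℝ H (t, x))
      (fderiv ℝ (fderiv ℝ H) (0, x) (1, 0)) 0 :=
    (hH'.differentiable (by simp) (0, x)).hasFDerivAt.comp_hasDerivAt 0 hcurve
  have hB2' : HasDerivAt (fun t : ℝ => fderiv ℝ H (t, x) (0, v))
      (fderiv ℝ (fderiv ℝ H) (0, x) (1, 0) (0, v)) 0 := by
    have := hB2.clm_apply (hasDerivAt_const (0:ℝ) (((0:ℝ), v) : ℝ × M))
    simpa using this
  -- B3: symmetry of second derivative
  have hsym : fderiv ℝ (fderiv ℝ H) (0, x) (1, 0) ((0:ℝ), v)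
      = fderiv ℝ (fderiv ℝ H) (0, x) ((0:ℝ), v) (1, 0) :=
    (hH.contDiffAt.isSymmSndFDerivAt (by rw [minSmoothness_of_isRCLikeNormedField]; exact WithTop.coe_le_coe.mpr le_top)) _ _
  -- B4: swap evaluation
  have hB4 : fderiv ℝ (fderiv ℝ H) (0, x) ((0:ℝ), v) ((1:ℝ), (0:M))
      = fderiv ℝ (fun p => fderiv ℝ H p ((1:ℝ), (0:M))) (0, x) ((0:ℝ), v) := by
    rw [fderiv_clm_apply (hH'.differentiable (by simp) (0, x))
      (differentiableAt_const _)]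
    simp
  -- B5: the t-partial of H
  have hB5 : ∀ p : ℝ × M, fderiv ℝ H p ((1:ℝ), (0:M))
      = f p.2 * (exp (p.1 • F p.2) * F p.2) := by
    intro p
    have hc : HasDerivAt (fun t : ℝ => (t, p.2)) ((1 : ℝ), (0 : M)) p.1 :=
      (hasDerivAt_id p.1).prodMk (hasDerivAt_const _ _)
    have h1 : HasDerivAt (fun t : ℝ => H (t, p.2)) (fderiv ℝ H p ((1:ℝ), (0:M))) p.1 := by
      exact (hH.differentiable (by simp) p).hasFDerivAt.comp_hasDerivAt p.1 hc
    have h2 : HasDerivAt (fun t : ℝ => H (t, p.2))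
        (f p.2 * (exp (p.1 • F p.2) * F p.2)) p.1 :=
      (hasDerivAt_exp_smul_const (𝕂 := ℝ) (F p.2) p.1).const_mul (f p.2)
    exact h1.unique h2
  -- B6: compute the spatial derivative of the t-partial at t = 0
  have hfd : DifferentiableAt ℝ f x := hf.differentiable (by simp) x
  have hFd : DifferentiableAt ℝ F x := hF.differentiable (by simp) x
  have hmul : HasFDerivAt (fun y => f y * F y)
      (f x • fderiv ℝ F x + (fderiv ℝ f x).smulRight (F x)) x :=
    hfd.hasFDerivAt.mul' hFd.hasFDerivAt
  have hB6 : fderiv ℝ (fun p : ℝ × M => fderiv ℝ H p ((1:ℝ), (0:M))) (0, x) ((0:ℝ), v)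
      = fderiv ℝ f x v * F x + f x * fderiv ℝ F x v := by
    have hKeq : (fun p : ℝ × M => fderiv ℝ H p ((1:ℝ), (0:M)))
        = fun p : ℝ × M => f p.2 * (exp (p.1 • F p.2) * F p.2) := funext hB5
    rw [hKeq]
    have hK : ContDiff ℝ (⊤ : ℕ∞) (fun p : ℝ × M => f p.2 * (exp (p.1 • F p.2) * F p.2)) :=
      (hf.comp contDiff_snd).mul
        ((hexp.comp (contDiff_fst.smul (hF.comp contDiff_snd))).mul (hF.comp contDiff_snd))
    have h1 : HasFDerivAt (fun y : M => ((0:ℝ), y))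
        (ContinuousLinearMap.inr ℝ ℝ M) x := hasFDerivAt_prodMk_right 0 x
    have h3 : HasFDerivAt (fun y : M => f y * (exp ((0:ℝ) • F y) * F y))
        ((fderiv ℝ (fun p : ℝ × M => f p.2 * (exp (p.1 • F p.2) * F p.2)) (0, x)).comp
          (ContinuousLinearMap.inr ℝ ℝ M)) x :=
      (hK.differentiable (by simp) (0, x)).hasFDerivAt.comp x h1
    have heq : (fun y : M => f y * (exp ((0:ℝ) • F y) * F y)) = fun y => f y * F y := by
      funext y; simp [exp_zero]
    rw [heq] at h3
    have := h3.unique hmul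
    calc fderiv ℝ (fun p : ℝ × M => f p.2 * (exp (p.1 • F p.2) * F p.2)) (0, x) ((0:ℝ), v)
        = ((fderiv ℝ (fun p : ℝ × M => f p.2 * (exp (p.1 • F p.2) * F p.2)) (0, x)).comp
          (ContinuousLinearMap.inr ℝ ℝ M)) v := rfl
      _ = (f x • fderiv ℝ F x + (fderiv ℝ f x).smulRight (F x)) v := by rw [this]
      _ = fderiv ℝ f x v * F x + f x * fderiv ℝ F x v := by
          simp [smul_eq_mul, add_comm]
  -- w : the spatial part, and its derivative in t
  have hw : HasDerivAt (fun t : ℝ => fderiv ℝ (fun y => f y * exp (t • F y)) x v)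
      (fderiv ℝ f x v * F x + f x * fderiv ℝ F x v) 0 := by
    have : HasDerivAt (fun t : ℝ => fderiv ℝ H (t, x) ((0:ℝ), v))
        (fderiv ℝ f x v * F x + f x * fderiv ℝ F x v) 0 := by
      rw [hsym, hB4, hB6] at hB2'
      exact hB2'
    simpa only [← hB1] using this
  -- Step A: derivative of the inverse factor
  have hu : HasDerivAt (fun t : ℝ => Ring.inverse (f x * exp (t • F x)))
      (-(F x) * Ring.inverse (f x)) 0 := by
    have h1 : HasDerivAt (fun t : ℝ => exp (t • (-F x))) (-F x) 0 := by
      simpa using hasDerivAt_exp_smul_const (𝕂 := ℝ) (-F x) 0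
    have h2 := h1.mul_const (Ring.inverse (f x))
    have heq : (fun t : ℝ => Ring.inverse (f x * exp (t • F x)))
        = fun t : ℝ => exp (t • (-F x)) * Ring.inverse (f x) := by
      funext t
      letI : NormedAlgebra ℚ A := NormedAlgebra.restrictScalars ℚ ℝ A
      rw [ring_inverse_mul_of_units (hunit x) (isUnit_exp _), Ring.inverse_exp, smul_neg]
    rw [heq]
    exact h2
  -- Assemble via the product rule
  have hprod := hu.mul hw
  have h0 : (fun y => f y * exp ((0:ℝ) • F y)) = f := by
    funext y; simp
  simp only [zero_smul, exp_zero, mul_one] at hprod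
  convert hprod using 1
  · rfl
  rw [hα, mul_add, Ring.inverse_mul_cancel_left _ _ (hunit x)]
  noncomm_ring
end

section
/- Let f: M → G be smooth with α = f*ω, F: M → g smooth, and define Φ = (f · exp(F))*ω. Then for every v ∈ T_xM, Φ(v) = α(v) + ((1 - e^{-ad(F(x))})/ad(F(x))) (dF(v) + [α(v), F(x)]), where (1-e^{-ad(X)})/ad(X) denotes the convergent power series Σ_{n≥0} (-1)^n ad(X)^n/(n+1)!. -/
open NormedSpace

set_option linter.unusedSectionVars false

namespace DDEV

variable {A : Type*} [NormedRing A] [NormedAlgebra ℝ A]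

noncomputable def Lm (X : A) : A →L[ℝ] A := ContinuousLinearMap.mul ℝ A X
noncomputable def Rm (X : A) : A →L[ℝ] A := (ContinuousLinearMap.mul ℝ A).flip X
@[simp] lemma Lm_apply (X Y : A) : Lm X Y = X * Y := rfl
@[simp] lemma Rm_apply (X Y : A) : Rm X Y = Y * X := rfl

lemma Lpow_apply (X Y : A) (n : ℕ) : ((Lm X) ^ n) Y = X ^ n * Y := by
  induction n with
  | zero => simp
  | succ n ih =>
    rw [pow_succ', ContinuousLinearMap.mul_apply, ih, pow_succ', mul_assoc]
    simp

lemma Rpow_apply (X Y : A) (n : ℕ) : ((Rm X) ^ n) Y = Y * X ^ n := by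
  induction n generalizing Y with
  | zero => simp
  | succ n ih =>
    rw [pow_succ, ContinuousLinearMap.mul_apply, Rm_apply, ih, mul_assoc, ← pow_succ']

lemma ad_iterate (X Y : A) (n : ℕ) :
    (fun Z => X * Z - Z * X)^[n] Y = ((Lm X - Rm X) ^ n) Y := by
  induction n generalizing Y with
  | zero => simp
  | succ n ih =>
    rw [Function.iterate_succ_apply, pow_succ, ContinuousLinearMap.mul_apply, ih]
    rfl

lemma neg_pow_apply (C : A →L[ℝ] A) (n : ℕ) (Z : A) :
    ((-C) ^ n) Z = ((-1 : ℝ) ^ n) • ((C ^ n) Z) := by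
  induction n generalizing Z with
  | zero => simp
  | succ n ih =>
    rw [pow_succ, ContinuousLinearMap.mul_apply, ContinuousLinearMap.neg_apply, map_neg, ih,
      pow_succ (-1:ℝ), mul_neg_one, neg_smul, pow_succ, ContinuousLinearMap.mul_apply]

lemma ad_iter_add (X Y Z : A) (n : ℕ) :
    (fun W => X * W - W * X)^[n] (Y + Z)
      = (fun W => X * W - W * X)^[n] Y + (fun W => X * W - W * X)^[n] Z := by
  simp [ad_iterate, map_add]

lemma ad_iter_neg (X Y : A) (n : ℕ) :
    (fun W => X * W - W * X)^[n] (-Y) = -(fun W => X * W - W * X)^[n] Y := by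
  simp [ad_iterate, map_neg]

lemma ad_iter_norm (X Z : A) (n : ℕ) :
    ‖(fun W => X * W - W * X)^[n] Z‖ ≤ (2 * ‖X‖) ^ n * ‖Z‖ := by
  induction n with
  | zero => simp
  | succ n ih =>
    rw [Function.iterate_succ_apply']
    set W := (fun W => X * W - W * X)^[n] Z with hW
    calc ‖X * W - W * X‖ ≤ ‖X * W‖ + ‖W * X‖ := norm_sub_le _ _
      _ ≤ ‖X‖ * ‖W‖ + ‖W‖ * ‖X‖ := add_le_add (norm_mul_le _ _) (norm_mul_le _ _)
      _ = 2 * ‖X‖ * ‖W‖ := by ring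
      _ ≤ 2 * ‖X‖ * ((2 * ‖X‖) ^ n * ‖Z‖) := by
          apply mul_le_mul_of_nonneg_left ih; positivity
      _ = (2 * ‖X‖) ^ (n + 1) * ‖Z‖ := by ring

lemma alt_sum (m i : ℕ) :
    ∑ p ∈ Finset.range (i + 1), (-1:ℝ)^p * ((m+1).choose p : ℝ)
      = (-1:ℝ)^i * (m.choose i : ℝ) := by
  induction i with
  | zero => simp
  | succ i ih =>
    rw [Finset.sum_range_succ, ih, Nat.choose_succ_succ m i]
    push_cast
    ring

lemma key_scalar (m i : ℕ) (h : i ≤ m) :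
    ∑ p ∈ Finset.range (i + 1), ((-1:ℝ)^p / ((p.factorial : ℝ) * ((m - p + 1).factorial : ℝ)))
      = (-1:ℝ)^i * (m.choose i : ℝ) / ((m+1).factorial : ℝ) := by
  rw [← alt_sum m i, Finset.sum_div]
  apply Finset.sum_congr rfl
  intro p hp
  have hpm : p ≤ m := le_trans (Nat.lt_succ_iff.mp (Finset.mem_range.mp hp)) h
  have hc : ((m+1).choose p : ℝ) = ((m+1).factorial : ℝ) / ((p.factorial : ℝ) * ((m + 1 - p).factorial : ℝ)) := by
    exact_mod_cast Nat.cast_choose ℝ (le_trans hpm (Nat.le_succ m))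
  have : m + 1 - p = m - p + 1 := by omega
  rw [this] at hc
  rw [hc]
  have h1 : (p.factorial : ℝ) ≠ 0 := by exact_mod_cast (Nat.factorial_pos p).ne'
  have h2 : (((m - p + 1).factorial : ℝ)) ≠ 0 := by exact_mod_cast (Nat.factorial_pos _).ne'
  have h3 : (((m + 1).factorial : ℝ)) ≠ 0 := by exact_mod_cast (Nat.factorial_pos _).ne'
  field_simp

lemma commute_Lm_negRm (X : A) : Commute (Lm X) (-(Rm X)) := by
  show Lm X * (-(Rm X)) = (-(Rm X)) * Lm X
  ext W
  simp [ContinuousLinearMap.mul_apply, mul_assoc]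

lemma ad_iter_expand (X Y : A) (m : ℕ) :
    (fun Z => X * Z - Z * X)^[m] Y
      = ∑ i ∈ Finset.range (m + 1),
          ((-1:ℝ)^(m - i) * ((m.choose i : ℕ) : ℝ)) • (X ^ i * Y * X ^ (m - i)) := by
  rw [ad_iterate, show Lm X - Rm X = Lm X + (-(Rm X)) by rw [sub_eq_add_neg],
    Commute.add_pow (commute_Lm_negRm X), ContinuousLinearMap.sum_apply]
  apply Finset.sum_congr rfl
  intro i _
  rw [ContinuousLinearMap.mul_apply, ContinuousLinearMap.mul_apply]
  simp only [neg_pow_apply, Rpow_apply, Lpow_apply, map_smul, mul_assoc,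
    ContinuousLinearMap.natCast_apply]
  rw [show ((m.choose i) • Y : A) = ((m.choose i : ℝ)) • Y from (Nat.cast_smul_eq_nsmul ℝ _ _).symm,
    smul_mul_assoc, mul_smul_comm, smul_smul, mul_comm ((-1:ℝ)^(m-i))]

noncomputable def Pn (n : ℕ) (W : A) : A →L[ℝ] A :=
  ∑ k ∈ Finset.range n, (Lm (W ^ k)).comp (Rm (W ^ (n - 1 - k)))

lemma Pn_apply (n : ℕ) (W Y : A) :
    Pn n W Y = ∑ k ∈ Finset.range n, W ^ k * (Y * W ^ (n - 1 - k)) := by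
  simp [Pn]

lemma hasFDerivAt_pow_clm (n : ℕ) (W : A) : HasFDerivAt (fun V : A => V ^ n) (Pn n W) W := by
  induction n with
  | zero =>
    have : Pn 0 W = 0 := by ext Y; simp [Pn]
    rw [this]
    simpa using (hasFDerivAt_const (1 : A) W)
  | succ n ih =>
    have h := ih.mul' (hasFDerivAt_id W)
    have hfun : (fun V : A => V ^ n * V) = fun V : A => V ^ (n + 1) := by
      funext V; rw [pow_succ]
    simp only [id] at h
    have h : HasFDerivAt (fun V : A => V ^ (n + 1))
        (W ^ n • ContinuousLinearMap.id ℝ A + MulOpposite.op W • Pn n W) W := by rw [← hfun]; exact h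
    convert h using 1
    ext Y
    show Pn (n+1) W Y = W ^ n • Y + Pn n W Y • W
    have e1 : ∀ k ∈ Finset.range n,
        W ^ k * (Y * W ^ (n + 1 - 1 - k)) = (W ^ k * (Y * W ^ (n - 1 - k))) * W := by
      intro k hk
      have hk' := Finset.mem_range.mp hk
      have : n + 1 - 1 - k = (n - 1 - k) + 1 := by omega
      rw [this, pow_succ, mul_assoc, mul_assoc]
    rw [Pn_apply, Pn_apply, Finset.sum_range_succ, smul_eq_mul, smul_eq_mul]
    rw [Finset.sum_congr rfl e1, ← Finset.sum_mul]
    have e2 : W ^ n * (Y * W ^ (n + 1 - 1 - n)) = W ^ n * Y := by norm_num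
    rw [e2, add_comm]

lemma norm_pow_le_max (W : A) (k : ℕ) : ‖W ^ k‖ ≤ max ‖(1:A)‖ 1 * ‖W‖ ^ k := by
  cases k with
  | zero => simpa using le_max_left ‖(1:A)‖ 1
  | succ k =>
    calc ‖W ^ (k+1)‖ ≤ ‖W‖ ^ (k+1) := norm_pow_le' W (Nat.succ_pos k)
      _ = 1 * ‖W‖ ^ (k+1) := (one_mul _).symm
      _ ≤ max ‖(1:A)‖ 1 * ‖W‖ ^ (k+1) := by
          apply mul_le_mul_of_nonneg_right (le_max_right _ _) (by positivity)

lemma norm_Pn_le {r : ℝ} (n : ℕ) (W : A) (hW : ‖W‖ ≤ r) :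
    ‖Pn n W‖ ≤ n * ((max ‖(1:A)‖ 1) ^ 2 * r ^ (n - 1)) := by
  set C := max ‖(1:A)‖ 1 with hC
  have hC1 : (1:ℝ) ≤ C := le_max_right _ _
  have hr : 0 ≤ r := le_trans (norm_nonneg W) hW
  have hterm : ∀ k ∈ Finset.range n, ‖(Lm (W ^ k)).comp (Rm (W ^ (n - 1 - k)))‖
      ≤ C ^ 2 * r ^ (n - 1) := by
    intro k hk
    have hk' := Finset.mem_range.mp hk
    apply ContinuousLinearMap.opNorm_le_bound _ (by positivity)
    intro Y
    calc ‖W ^ k * (Y * W ^ (n - 1 - k))‖ ≤ ‖W ^ k‖ * (‖Y‖ * ‖W ^ (n - 1 - k)‖) :=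
          le_trans (norm_mul_le _ _) (by
            apply mul_le_mul_of_nonneg_left (norm_mul_le _ _) (norm_nonneg _))
      _ ≤ (C * ‖W‖ ^ k) * (‖Y‖ * (C * ‖W‖ ^ (n - 1 - k))) := by
          apply mul_le_mul (norm_pow_le_max W k)
          · apply mul_le_mul_of_nonneg_left (norm_pow_le_max W _) (norm_nonneg _)
          · positivity
          · positivity
      _ = C ^ 2 * (‖W‖ ^ k * ‖W‖ ^ (n - 1 - k)) * ‖Y‖ := by ring
      _ ≤ C ^ 2 * r ^ (n - 1) * ‖Y‖ := by
          apply mul_le_mul_of_nonneg_right _ (norm_nonneg Y)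
          apply mul_le_mul_of_nonneg_left _ (by positivity)
          rw [← pow_add]
          have he : k + (n - 1 - k) = n - 1 := by omega
          rw [he]
          exact pow_le_pow_left₀ (norm_nonneg W) hW _
  calc ‖Pn n W‖ ≤ ∑ k ∈ Finset.range n, ‖(Lm (W ^ k)).comp (Rm (W ^ (n - 1 - k)))‖ :=
        norm_sum_le _ _
    _ ≤ ∑ _k ∈ Finset.range n, C ^ 2 * r ^ (n - 1) := Finset.sum_le_sum hterm
    _ = n * (C ^ 2 * r ^ (n - 1)) := by simp [mul_comm]

lemma summable_u (c r : ℝ) :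
    Summable (fun n : ℕ => (n.factorial : ℝ)⁻¹ * (n * (c * r ^ (n - 1)))) := by
  apply (summable_nat_add_iff 1).mp
  apply Summable.congr ((Real.summable_pow_div_factorial r).mul_left c)
  intro n
  simp only [Nat.add_sub_cancel]
  have h : ((n + 1).factorial : ℝ) = (n + 1) * n.factorial := by
    rw [Nat.factorial_succ]; push_cast; ring
  rw [h]
  have h1 : (n.factorial : ℝ) ≠ 0 := by exact_mod_cast (Nat.factorial_pos n).ne'
  have h2 : ((n:ℝ) + 1) ≠ 0 := by positivity
  field_simp
  push_cast
  ring

lemma neg_pow_smul (X : A) (n : ℕ) : (-X)^n = ((-1:ℝ)^n) • X^n := by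
  induction n with
  | zero => simp
  | succ n ih =>
    rw [pow_succ, ih, smul_mul_assoc, mul_neg, smul_neg, ← pow_succ, pow_succ (-1:ℝ) n,
      mul_neg_one, neg_smul]

lemma norm_block_le (X Y : A) (n : ℕ) :
    ‖∑ k ∈ Finset.range n, X ^ k * (Y * X ^ (n - 1 - k))‖
      ≤ n * ((max ‖(1:A)‖ 1) ^ 2 * ‖Y‖ * ‖X‖ ^ (n - 1)) := by
  set C := max ‖(1:A)‖ 1 with hC
  have hterm : ∀ k ∈ Finset.range n,
      ‖X ^ k * (Y * X ^ (n - 1 - k))‖ ≤ C ^ 2 * ‖Y‖ * ‖X‖ ^ (n - 1) := by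
    intro k hk
    have hk' := Finset.mem_range.mp hk
    calc ‖X ^ k * (Y * X ^ (n - 1 - k))‖ ≤ ‖X ^ k‖ * (‖Y‖ * ‖X ^ (n - 1 - k)‖) :=
          le_trans (norm_mul_le _ _)
            (mul_le_mul_of_nonneg_left (norm_mul_le _ _) (norm_nonneg _))
      _ ≤ (C * ‖X‖ ^ k) * (‖Y‖ * (C * ‖X‖ ^ (n - 1 - k))) := by
          apply mul_le_mul (norm_pow_le_max X k)
          · exact mul_le_mul_of_nonneg_left (norm_pow_le_max X _) (norm_nonneg _)
          · positivity
          · positivity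
      _ = C ^ 2 * ‖Y‖ * (‖X‖ ^ k * ‖X‖ ^ (n - 1 - k)) := by ring
      _ = C ^ 2 * ‖Y‖ * ‖X‖ ^ (n - 1) := by
          rw [← pow_add]
          congr 2
          omega
  calc ‖∑ k ∈ Finset.range n, X ^ k * (Y * X ^ (n - 1 - k))‖
      ≤ ∑ k ∈ Finset.range n, ‖X ^ k * (Y * X ^ (n - 1 - k))‖ := norm_sum_le _ _
    _ ≤ ∑ _k ∈ Finset.range n, C ^ 2 * ‖Y‖ * ‖X‖ ^ (n - 1) := Finset.sum_le_sum hterm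
    _ = n * (C ^ 2 * ‖Y‖ * ‖X‖ ^ (n - 1)) := by simp [mul_comm]

lemma summable_norm_a (X : A) :
    Summable (fun p : ℕ => ‖((-1:ℝ)^p * (p.factorial : ℝ)⁻¹) • X ^ p‖) := by
  apply Summable.of_nonneg_of_le (fun p => norm_nonneg _)
    (fun p => ?_) (((Real.summable_pow_div_factorial ‖X‖).mul_left (max ‖(1:A)‖ 1)))
  have h := norm_smul ((-1:ℝ)^p * (p.factorial : ℝ)⁻¹) (X ^ p)
  rw [h]
  have h1 : ‖(-1:ℝ)^p * (p.factorial : ℝ)⁻¹‖ = (p.factorial : ℝ)⁻¹ := by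
    rw [norm_mul, norm_pow, norm_neg, norm_one, one_pow, one_mul]
    simp
  rw [h1]
  calc (p.factorial : ℝ)⁻¹ * ‖X ^ p‖ ≤ (p.factorial : ℝ)⁻¹ * (max ‖(1:A)‖ 1 * ‖X‖ ^ p) := by
        apply mul_le_mul_of_nonneg_left (norm_pow_le_max X p) (by positivity)
    _ = max ‖(1:A)‖ 1 * (‖X‖ ^ p / p.factorial) := by ring

lemma summable_norm_b (X Y : A) :
    Summable (fun n : ℕ => ‖(((n + 1).factorial : ℝ))⁻¹ •
      ∑ k ∈ Finset.range (n + 1), X ^ k * (Y * X ^ (n - k))‖) := by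
  apply Summable.of_nonneg_of_le (fun n => norm_nonneg _) (fun n => ?_)
    (((Real.summable_pow_div_factorial ‖X‖).mul_left ((max ‖(1:A)‖ 1) ^ 2 * ‖Y‖)))
  have hsum : ∑ k ∈ Finset.range (n + 1), X ^ k * (Y * X ^ (n - k))
      = ∑ k ∈ Finset.range (n + 1), X ^ k * (Y * X ^ (n + 1 - 1 - k)) := by
    apply Finset.sum_congr rfl
    intro k hk
    congr 2 <;> omega
  have h := norm_smul (((n + 1).factorial : ℝ))⁻¹
    (∑ k ∈ Finset.range (n + 1), X ^ k * (Y * X ^ (n - k)))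
  rw [h, hsum]
  have h1 : ‖(((n + 1).factorial : ℝ))⁻¹‖ = (((n + 1).factorial : ℝ))⁻¹ := by simp
  rw [h1]
  calc (((n + 1).factorial : ℝ))⁻¹ * ‖∑ k ∈ Finset.range (n + 1), X ^ k * (Y * X ^ (n + 1 - 1 - k))‖
      ≤ (((n + 1).factorial : ℝ))⁻¹ * ((n + 1) * ((max ‖(1:A)‖ 1) ^ 2 * ‖Y‖ * ‖X‖ ^ (n + 1 - 1))) := by
        apply mul_le_mul_of_nonneg_left _ (by positivity)
        exact_mod_cast norm_block_le X Y (n + 1)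
    _ = (max ‖(1:A)‖ 1) ^ 2 * ‖Y‖ * (‖X‖ ^ n / n.factorial) := by
        have h2 : ((n + 1).factorial : ℝ) = (n + 1) * n.factorial := by
          rw [Nat.factorial_succ]; push_cast; ring
        rw [h2]
        simp only [Nat.add_sub_cancel]
        have h3 : (n.factorial : ℝ) ≠ 0 := by exact_mod_cast (Nat.factorial_pos n).ne'
        have h4 : ((n:ℝ) + 1) ≠ 0 := by positivity
        field_simp

variable [CompleteSpace A]

lemma tsum_apply' {f : ℕ → A →L[ℝ] A} (hf : Summable f) (Z : A) :
    (∑' n, f n) Z = ∑' n, f n Z :=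
  ContinuousLinearMap.map_tsum (ContinuousLinearMap.apply ℝ A Z) hf

lemma exp_Lm_apply (X Z : A) : exp (Lm X) Z = exp X * Z := by
  have e1 : exp (Lm X) = ∑' n : ℕ, ((n.factorial : ℝ))⁻¹ • (Lm X) ^ n := by rw [exp_eq_tsum ℝ]
  have e2 : exp X = ∑' n : ℕ, ((n.factorial : ℝ))⁻¹ • X ^ n := by rw [exp_eq_tsum ℝ]
  rw [e1, e2, tsum_apply' (expSeries_summable' (𝕂 := ℝ) (Lm X)),
    show (∑' n : ℕ, ((n.factorial : ℝ))⁻¹ • X ^ n) * Z = Rm Z (∑' n : ℕ, ((n.factorial : ℝ))⁻¹ • X ^ n) from rfl,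
    ContinuousLinearMap.map_tsum (Rm Z) (expSeries_summable' (𝕂 := ℝ) X)]
  congr 1; funext n
  simp only [ContinuousLinearMap.smul_apply, Lpow_apply, Rm_apply, smul_mul_assoc]

lemma exp_Rm_apply (X Z : A) : exp (Rm X) Z = Z * exp X := by
  have e1 : exp (Rm X) = ∑' n : ℕ, ((n.factorial : ℝ))⁻¹ • (Rm X) ^ n := by rw [exp_eq_tsum ℝ]
  have e2 : exp X = ∑' n : ℕ, ((n.factorial : ℝ))⁻¹ • X ^ n := by rw [exp_eq_tsum ℝ]
  rw [e1, e2, tsum_apply' (expSeries_summable' (𝕂 := ℝ) (Rm X)),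
    show Z * (∑' n : ℕ, ((n.factorial : ℝ))⁻¹ • X ^ n) = Lm Z (∑' n : ℕ, ((n.factorial : ℝ))⁻¹ • X ^ n) from rfl,
    ContinuousLinearMap.map_tsum (Lm Z) (expSeries_summable' (𝕂 := ℝ) X)]
  congr 1; funext n
  simp only [ContinuousLinearMap.smul_apply, Rpow_apply, Lm_apply, mul_smul_comm]

lemma commute_Lm_Rm (X : A) : Commute (Rm X) (-(Lm X)) := by
  show Rm X * (-(Lm X)) = (-(Lm X)) * Rm X
  ext W
  simp [ContinuousLinearMap.mul_apply, mul_assoc]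

lemma conj_tsum (X Z : A) :
    ∑' n : ℕ, ((-1:ℝ)^n / n.factorial) • (fun W => X * W - W * X)^[n] Z
      = exp (-X) * Z * exp X := by
  have h1 : ∀ n : ℕ, ((-1:ℝ)^n / n.factorial) • (fun W => X * W - W * X)^[n] Z
      = ((n.factorial : ℝ))⁻¹ • (((Rm X - Lm X) ^ n) Z) := by
    intro n
    rw [ad_iterate, show Rm X - Lm X = -(Lm X - Rm X) by rw [neg_sub], neg_pow_apply,
      smul_smul]
    congr 1
    rw [mul_comm, div_eq_mul_inv]
  rw [tsum_congr h1,
    show (fun n : ℕ => ((n.factorial : ℝ))⁻¹ • ((Rm X - Lm X) ^ n) Z)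
      = fun n : ℕ => (((n.factorial : ℝ))⁻¹ • (Rm X - Lm X) ^ n) Z by funext n; simp,
    ← tsum_apply' (expSeries_summable' (𝕂 := ℝ) (Rm X - Lm X))]
  have h2 : (∑' n : ℕ, ((n.factorial : ℝ))⁻¹ • (Rm X - Lm X) ^ n) = exp (Rm X - Lm X) := by
    rw [exp_eq_tsum ℝ]
  rw [h2, sub_eq_add_neg, exp_add_of_commute_of_mem_ball (𝕂 := ℝ) (commute_Lm_Rm X)
    ((expSeries_radius_eq_top ℝ (A →L[ℝ] A)).symm ▸ edist_lt_top _ _)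
    ((expSeries_radius_eq_top ℝ (A →L[ℝ] A)).symm ▸ edist_lt_top _ _)]
  rw [ContinuousLinearMap.mul_apply, show -(Lm X) = Lm (-X) by ext W; simp, exp_Lm_apply,
    exp_Rm_apply]

lemma summable_T (X Z : A) :
    Summable (fun n : ℕ => ((-1:ℝ)^n / n.factorial) • (fun W => X * W - W * X)^[n] Z) := by
  apply Summable.of_norm_bounded
    (((Real.summable_pow_div_factorial (2 * ‖X‖)).mul_right ‖Z‖))
  intro n
  rw [norm_smul]
  have h1 : ‖(-1:ℝ)^n / n.factorial‖ = (n.factorial : ℝ)⁻¹ := by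
    rw [norm_div, norm_pow, norm_neg, norm_one, one_pow]
    simp [abs_of_nonneg]
  rw [h1]
  calc (n.factorial : ℝ)⁻¹ * ‖(fun W => X * W - W * X)^[n] Z‖
      ≤ (n.factorial : ℝ)⁻¹ * ((2 * ‖X‖) ^ n * ‖Z‖) := by
        apply mul_le_mul_of_nonneg_left (ad_iter_norm X Z n); positivity
    _ = (2 * ‖X‖) ^ n / n.factorial * ‖Z‖ := by ring

lemma summable_S (X Z : A) :
    Summable (fun n : ℕ => ((-1:ℝ)^n / (n + 1).factorial) • (fun W => X * W - W * X)^[n] Z) := by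
  apply Summable.of_norm_bounded
    (((Real.summable_pow_div_factorial (2 * ‖X‖)).mul_right ‖Z‖))
  intro n
  rw [norm_smul]
  have h1 : ‖(-1:ℝ)^n / (n + 1).factorial‖ = ((n+1).factorial : ℝ)⁻¹ := by
    rw [norm_div, norm_pow, norm_neg, norm_one, one_pow]
    simp [abs_of_nonneg]
  rw [h1]
  have h2 : ((n+1).factorial : ℝ)⁻¹ ≤ (n.factorial : ℝ)⁻¹ := by
    apply inv_anti₀
    · exact_mod_cast Nat.factorial_pos n
    · exact_mod_cast Nat.factorial_le (Nat.le_succ n)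
  calc ((n+1).factorial : ℝ)⁻¹ * ‖(fun W => X * W - W * X)^[n] Z‖
      ≤ (n.factorial : ℝ)⁻¹ * ((2 * ‖X‖) ^ n * ‖Z‖) := by
        apply mul_le_mul h2 (ad_iter_norm X Z n) (norm_nonneg _) (by positivity)
    _ = (2 * ‖X‖) ^ n / n.factorial * ‖Z‖ := by ring

lemma bracket_S (X Z : A) :
    ∑' n : ℕ, ((-1:ℝ)^n / (n + 1).factorial) • (fun W => X * W - W * X)^[n] (X * Z - Z * X)
      = Z - ∑' n : ℕ, ((-1:ℝ)^n / n.factorial) • (fun W => X * W - W * X)^[n] Z := by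
  have h := Summable.tsum_eq_zero_add (summable_T X Z)
  have h2 : ∀ n : ℕ, ((-1:ℝ)^(n+1) / (n + 1).factorial) • (fun W => X * W - W * X)^[n+1] Z
      = -(((-1:ℝ)^n / (n + 1).factorial) • (fun W => X * W - W * X)^[n] (X * Z - Z * X)) := by
    intro n
    rw [Function.iterate_succ_apply, pow_succ, mul_neg_one, neg_div, neg_smul]
  rw [tsum_congr h2, tsum_neg] at h
  simp only [pow_zero, Nat.factorial_zero, Nat.cast_one, div_one, Function.iterate_zero_apply,
    one_smul] at h
  rw [h]
  abel

-- the (shifted) coefficient of the derivative series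
lemma term_eq (X Y : A) (m : ℕ) :
    ∑ pn ∈ Finset.HasAntidiagonal.antidiagonal m,
      ((((-1:ℝ)^pn.1 * (pn.1.factorial : ℝ)⁻¹) • X ^ pn.1) *
        (((pn.2 + 1).factorial : ℝ)⁻¹ •
          ∑ k ∈ Finset.range (pn.2 + 1), X ^ k * (Y * X ^ (pn.2 - k))))
      = ((-1:ℝ)^m / ((m+1).factorial : ℝ)) • (fun Z => X * Z - Z * X)^[m] Y := by
  -- RHS expansion
  rw [ad_iter_expand, Finset.smul_sum]
  have hR : ∀ i ∈ Finset.range (m + 1),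
      ((-1:ℝ)^m / ((m+1).factorial : ℝ)) •
          (((-1:ℝ)^(m - i) * ((m.choose i : ℕ) : ℝ)) • (X ^ i * Y * X ^ (m - i)))
        = ∑ p ∈ Finset.range (i + 1),
            ((-1:ℝ)^p / ((p.factorial : ℝ) * ((m - p + 1).factorial : ℝ)))
              • (X ^ i * (Y * X ^ (m - i))) := by
    intro i hi
    have him : i ≤ m := Nat.lt_succ_iff.mp (Finset.mem_range.mp hi)
    rw [← Finset.sum_smul, key_scalar m i him, smul_smul]
    congr 1
    · have hsgn : (-1:ℝ)^m = (-1:ℝ)^(m - i) * (-1:ℝ)^i := by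
        rw [← pow_add]
        congr 1
        omega
      have hsgn2 : (-1:ℝ)^(m - i) * (-1:ℝ)^m = (-1:ℝ)^i := by
        rw [hsgn, ← mul_assoc, ← mul_pow]
        norm_num
      calc ((-1:ℝ)^m / ((m+1).factorial : ℝ)) * ((-1:ℝ)^(m - i) * ((m.choose i : ℕ) : ℝ))
          = ((-1:ℝ)^(m - i) * (-1:ℝ)^m) * ((m.choose i : ℕ) : ℝ) / ((m+1).factorial : ℝ) := by
            ring
        _ = (-1:ℝ)^i * ((m.choose i : ℕ) : ℝ) / ((m+1).factorial : ℝ) := by rw [hsgn2]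
    · rw [mul_assoc]
  rw [Finset.sum_congr rfl hR]
  -- LHS expansion
  have hL : ∀ pn ∈ Finset.HasAntidiagonal.antidiagonal m,
      ((((-1:ℝ)^pn.1 * (pn.1.factorial : ℝ)⁻¹) • X ^ pn.1) *
        (((pn.2 + 1).factorial : ℝ)⁻¹ •
          ∑ k ∈ Finset.range (pn.2 + 1), X ^ k * (Y * X ^ (pn.2 - k))))
      = ∑ k ∈ Finset.range (pn.2 + 1),
          ((-1:ℝ)^pn.1 * ((pn.1.factorial : ℝ)⁻¹ * ((pn.2 + 1).factorial : ℝ)⁻¹))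
            • (X ^ (pn.1 + k) * (Y * X ^ (pn.2 - k))) := by
    intro pn _
    rw [smul_mul_assoc, mul_smul_comm, Finset.mul_sum, smul_smul, Finset.smul_sum]
    apply Finset.sum_congr rfl
    intro k _
    congr 1
    · ring
    · rw [← mul_assoc, ← pow_add]
  rw [Finset.sum_congr rfl hL]
  -- now reindex
  rw [Finset.sum_sigma', Finset.sum_sigma']
  refine Finset.sum_nbij' (fun x => ⟨x.1.1 + x.2, x.1.1⟩)
    (fun y => ⟨(y.2, m - y.2), y.1 - y.2⟩) ?_ ?_ ?_ ?_ ?_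
  · rintro ⟨⟨p, n⟩, k⟩ hx
    simp only [Finset.mem_sigma, Finset.HasAntidiagonal.mem_antidiagonal, Finset.mem_range] at hx ⊢
    omega
  · rintro ⟨i, p⟩ hy
    simp only [Finset.mem_sigma, Finset.HasAntidiagonal.mem_antidiagonal, Finset.mem_range] at hy ⊢
    omega
  · rintro ⟨⟨p, n⟩, k⟩ hx
    simp only [Finset.mem_sigma, Finset.HasAntidiagonal.mem_antidiagonal, Finset.mem_range] at hx
    obtain ⟨hpn, hk⟩ := hx
    have h1 : m - p = n := by omega
    have h2 : p + k - p = k := by omega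
    simp [h1, h2]
  · rintro ⟨i, p⟩ hy
    simp only [Finset.mem_sigma, Finset.HasAntidiagonal.mem_antidiagonal, Finset.mem_range] at hy
    obtain ⟨hi, hp⟩ := hy
    have h1 : p + (i - p) = i := by omega
    simp [h1]
  · rintro ⟨⟨p, n⟩, k⟩ hx
    simp only [Finset.mem_sigma, Finset.HasAntidiagonal.mem_antidiagonal, Finset.mem_range] at hx
    obtain ⟨rfl, hk⟩ : p + n = m ∧ k < n + 1 := hx
    simp only []
    have h1 : p + n - (p + k) = n - k := by omega
    have h2 : p + n - p + 1 = n + 1 := by omega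
    rw [h1, h2]
    congr 1
    rw [div_eq_mul_inv, mul_inv]

lemma summable_Pn_deriv (X : A) :
    Summable (fun n : ℕ => (n.factorial : ℝ)⁻¹ • Pn n X) := by
  apply Summable.of_norm_bounded (summable_u ((max ‖(1:A)‖ 1) ^ 2) ‖X‖)
  intro n
  have hn : ‖(n.factorial : ℝ)⁻¹ • Pn n X‖ = (n.factorial : ℝ)⁻¹ * ‖Pn n X‖ := by
    have := norm_smul ((n.factorial : ℝ)⁻¹) (Pn n X)
    simpa using this
  rw [hn]
  exact mul_le_mul_of_nonneg_left (norm_Pn_le n X le_rfl) (by positivity)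

noncomputable def expDeriv (X : A) : A →L[ℝ] A := ∑' n : ℕ, (n.factorial : ℝ)⁻¹ • Pn n X

lemma hasFDerivAt_exp' (X : A) : HasFDerivAt (exp : A → A) (expDeriv X) X := by
  set r := ‖X‖ + 1 with hr
  have h := hasFDerivAt_tsum_of_isPreconnected
    (u := fun n : ℕ => (n.factorial : ℝ)⁻¹ * (n * ((max ‖(1:A)‖ 1) ^ 2 * r ^ (n - 1))))
    (f := fun (n : ℕ) (W : A) => (n.factorial : ℝ)⁻¹ • W ^ n)
    (f' := fun (n : ℕ) (W : A) => (n.factorial : ℝ)⁻¹ • Pn n W)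
    (summable_u _ r) Metric.isOpen_ball (convex_ball (0:A) r).isPreconnected
    (fun n W _ => (hasFDerivAt_pow_clm n W).const_smul ((n.factorial : ℝ)⁻¹))
    (fun n W hWs => by
      have hn : ‖(n.factorial : ℝ)⁻¹ • Pn n W‖ = (n.factorial : ℝ)⁻¹ * ‖Pn n W‖ := by
        have := norm_smul ((n.factorial : ℝ)⁻¹) (Pn n W)
        simpa using this
      rw [hn]
      exact mul_le_mul_of_nonneg_left
        (norm_Pn_le n W (le_of_lt (mem_ball_zero_iff.mp hWs))) (by positivity))
    (x₀ := X) (by simp [mem_ball_zero_iff, hr]) (expSeries_summable' (𝕂 := ℝ) X)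
    (x := X) (by simp [mem_ball_zero_iff, hr])
  have hfun : (fun W : A => ∑' n : ℕ, (n.factorial : ℝ)⁻¹ • W ^ n) = (exp : A → A) := by
    funext W; rw [exp_eq_tsum ℝ]
  rw [hfun] at h
  exact h

lemma expDeriv_apply (X Y : A) :
    expDeriv X Y = ∑' n : ℕ, (n.factorial : ℝ)⁻¹ •
      ∑ k ∈ Finset.range n, X ^ k * (Y * X ^ (n - 1 - k)) := by
  rw [expDeriv, tsum_apply' (summable_Pn_deriv X)]
  congr 1; funext n
  simp [Pn_apply]

lemma summable_d (X Y : A) :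
    Summable (fun n : ℕ => (n.factorial : ℝ)⁻¹ •
      ∑ k ∈ Finset.range n, X ^ k * (Y * X ^ (n - 1 - k))) := by
  apply Summable.of_norm_bounded (summable_u ((max ‖(1:A)‖ 1) ^ 2 * ‖Y‖) ‖X‖)
  intro n
  have h := norm_smul ((n.factorial : ℝ))⁻¹ (∑ k ∈ Finset.range n, X ^ k * (Y * X ^ (n - 1 - k)))
  rw [h]
  have h1 : ‖((n.factorial : ℝ))⁻¹‖ = ((n.factorial : ℝ))⁻¹ := by simp
  rw [h1]
  calc ((n.factorial : ℝ))⁻¹ * ‖∑ k ∈ Finset.range n, X ^ k * (Y * X ^ (n - 1 - k))‖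
      ≤ ((n.factorial : ℝ))⁻¹ * (n * ((max ‖(1:A)‖ 1) ^ 2 * ‖Y‖ * ‖X‖ ^ (n - 1))) :=
        mul_le_mul_of_nonneg_left (norm_block_le X Y n) (by positivity)
    _ = (n.factorial : ℝ)⁻¹ * (n * ((max ‖(1:A)‖ 1) ^ 2 * ‖Y‖ * ‖X‖ ^ (n - 1))) := by ring

lemma exp_neg_eq (X : A) :
    exp (-X) = ∑' p : ℕ, ((-1:ℝ)^p * (p.factorial : ℝ)⁻¹) • X ^ p := by
  have e1 : exp (-X) = ∑' n : ℕ, ((n.factorial : ℝ))⁻¹ • (-X) ^ n := by rw [exp_eq_tsum ℝ]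
  rw [e1]
  apply tsum_congr
  intro p
  rw [neg_pow_smul, smul_smul, mul_comm]

lemma exp_neg_mul_expDeriv (X Y : A) :
    exp (-X) * expDeriv X Y
      = ∑' m : ℕ, ((-1:ℝ)^m / ((m+1).factorial : ℝ)) • (fun Z => X * Z - Z * X)^[m] Y := by
  have hshift : expDeriv X Y = ∑' n : ℕ, (((n + 1).factorial : ℝ))⁻¹ •
      ∑ k ∈ Finset.range (n + 1), X ^ k * (Y * X ^ (n + 1 - 1 - k)) := by
    rw [expDeriv_apply]
    rw [Summable.tsum_eq_zero_add (summable_d X Y)]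
    simp
  have hsum2 : ∀ n : ℕ, (((n + 1).factorial : ℝ))⁻¹ •
        ∑ k ∈ Finset.range (n + 1), X ^ k * (Y * X ^ (n + 1 - 1 - k))
      = (((n + 1).factorial : ℝ))⁻¹ • ∑ k ∈ Finset.range (n + 1), X ^ k * (Y * X ^ (n - k)) := by
    intro n
    rfl
  rw [hshift, tsum_congr hsum2, exp_neg_eq]
  rw [tsum_mul_tsum_eq_tsum_sum_antidiagonal_of_summable_norm
    (summable_norm_a X) (summable_norm_b X Y)]
  exact tsum_congr (term_eq X Y)

end DDEV

open DDEV in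
/-- Let `G` be the group of units of a real Banach algebra `A` with Lie algebra `g = A`,
`f : M → G` smooth with Darboux derivative `α_x(v) = f(x)⁻¹ df_x(v)`, `F : M → g` smooth,
and let `Φ = (f · exp(F))*ω` be the Darboux derivative of `f·exp(F)`.  Then for every
`v ∈ T_xM`,
`Φ_x(v) = α_x(v) + ((1 - e^{-ad(F(x))})/ad(F(x)))(dF_x(v) + [α_x(v), F(x)])`,
where the operator is the convergent series `Σ_{n≥0} (-1)ⁿ ad(F(x))ⁿ/(n+1)!` and
`ad(X)Y = [X,Y] = XY - YX`. -/
theorem darboux_derivative_of_exponential_variation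
    {M A : Type*} [NormedAddCommGroup M] [NormedSpace ℝ M]
    [NormedRing A] [NormedAlgebra ℝ A] [CompleteSpace A]
    (f : M → A) (hf : ContDiff ℝ (⊤ : ℕ∞) f) (hunit : ∀ x, IsUnit (f x))
    (α : M → M → A) (hα : ∀ x v, α x v = Ring.inverse (f x) * fderiv ℝ f x v)
    (F : M → A) (hF : ContDiff ℝ (⊤ : ℕ∞) F) (x : M) (v : M) :
    Ring.inverse (f x * exp (F x)) * fderiv ℝ (fun y => f y * exp (F y)) x v =
      α x v + ∑' n : ℕ, ((-1 : ℝ) ^ n / (n + 1).factorial) •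
        ((fun Y => F x * Y - Y * F x)^[n]
          (fderiv ℝ F x v + (α x v * F x - F x * α x v))) := by
  set X := F x with hX
  set a := α x v with ha
  have hdf : DifferentiableAt ℝ f x := (hf.differentiable (by simp)).differentiableAt
  have hdF : DifferentiableAt ℝ F x := (hF.differentiable (by simp)).differentiableAt
  set Y := fderiv ℝ F x v with hY
  -- derivative of the product
  have hcomp : HasFDerivAt (fun y => exp (F y)) ((expDeriv X).comp (fderiv ℝ F x)) x :=
    (hasFDerivAt_exp' X).comp x hdF.hasFDerivAt
  have hprod : HasFDerivAt (fun y => f y * exp (F y))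
      (f x • ((expDeriv X).comp (fderiv ℝ F x)) + (fderiv ℝ f x).smulRight (exp X)) x :=
    hdf.hasFDerivAt.mul' hcomp
  have hfd : fderiv ℝ (fun y => f y * exp (F y)) x v
      = f x * expDeriv X Y + fderiv ℝ f x v * exp X := by
    rw [hprod.fderiv]
    simp [smul_eq_mul, hY]
  -- inverse of the product
  have hinv : Ring.inverse (f x * exp X) = exp (-X) * Ring.inverse (f x) := by
    obtain ⟨u, hu⟩ := hunit x
    have hXball : X ∈ Metric.eball (0 : A) (expSeries ℝ A).radius :=
      (expSeries_radius_eq_top ℝ A).symm ▸ edist_lt_top _ _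
    have hinvexp : Ring.inverse (exp X) = exp (-X) := by
      letI := invertibleExpOfMemBall (𝕂 := ℝ) hXball
      rw [Ring.inverse_invertible, invOf_exp_of_mem_ball (𝕂 := ℝ) hXball]
    obtain ⟨w, hw⟩ := isUnit_exp_of_mem_ball (𝕂 := ℝ) hXball
    rw [← hu, ← hw, ← Units.val_mul, Ring.inverse_unit, mul_inv_rev, Units.val_mul,
      ← Ring.inverse_unit, ← Ring.inverse_unit, hu, hw, hinvexp]
  -- compute the left-hand side
  have hba : Ring.inverse (f x) * (fderiv ℝ f x v * exp X) = a * exp X := by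
    rw [ha, hα, mul_assoc]
  have hLHS : Ring.inverse (f x * exp X) * fderiv ℝ (fun y => f y * exp (F y)) x v
      = exp (-X) * expDeriv X Y + exp (-X) * a * exp X := by
    rw [hfd, hinv, mul_add, mul_assoc (exp (-X)), Ring.inverse_mul_cancel_left _ _ (hunit x),
      mul_assoc (exp (-X)), hba, ← mul_assoc]
  rw [hLHS]
  -- compute the right-hand side
  have hsplit : ∀ n : ℕ, ((-1 : ℝ) ^ n / (n + 1).factorial) •
        ((fun Z => X * Z - Z * X)^[n] (Y + (a * X - X * a)))
      = ((-1 : ℝ) ^ n / (n + 1).factorial) • ((fun Z => X * Z - Z * X)^[n] Y)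
        + -(((-1 : ℝ) ^ n / (n + 1).factorial) •
            ((fun Z => X * Z - Z * X)^[n] (X * a - a * X))) := by
    intro n
    rw [show a * X - X * a = -(X * a - a * X) from (neg_sub _ _).symm, ad_iter_add, ad_iter_neg, smul_add,
      smul_neg]
  have hRHS : ∑' n : ℕ, ((-1 : ℝ) ^ n / (n + 1).factorial) •
        ((fun Z => X * Z - Z * X)^[n] (Y + (a * X - X * a)))
      = (∑' n : ℕ, ((-1 : ℝ) ^ n / (n + 1).factorial) • ((fun Z => X * Z - Z * X)^[n] Y))
        - (a - exp (-X) * a * exp X) := by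
    rw [tsum_congr hsplit, Summable.tsum_add (summable_S X Y) ((summable_S X _).neg), tsum_neg,
      bracket_S, conj_tsum]
    abel
  rw [hRHS, ← exp_neg_mul_expDeriv]
  abel
end
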